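/- Let p be an odd prime and n a positive integer with p^α exactly dividing n. Setting f(x) = 1 - (1+x^n)(1-x) and g(x) = ((p-1)/2)(1+x^n), one has that p^{2α+1} exactly divides M_{Q_{4n}}(f, g). -/

import Mathlib

/-!
At a 2n-th root of unity z with z^n = -1 the factor of M is 1; at one with z^n = 1 it is
4 + s - 2(z + z⁻¹), where s = 1 - 4c² = p(2 - p) for c = (p - 1)/2. If u + v = 4 + s and uv = 4,
the product over the n-th roots of unity is u^n + v^n - 2^(n+1). Writing u = 2 + β, v = 2 + β' with
β, β' the roots of x² = sx + 2s, and (2 + β)^n - 2^n = β(X + Yβ) with X, Y ∈ ℤ, this gives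
2^n M = 2s (X² + sXY - 2sY²), a norm from ℤ[β].

Since β² ∈ p(ℤ + ℤβ), the binomial expansion of (2 + β)^n shows p^α ∣ Y and
X ≡ n 2^(n-1) + C(n,3) 2^(n-3) 2s mod p^(α+1), and the right side has valuation exactly α.
Hence the norm has valuation 2α and M has valuation 2α + 1.
-/

open Polynomial Complex Finset

noncomputable def Mzn (n : ℕ) (F : Polynomial ℤ) : ℂ :=
  ∏ j ∈ Finset.range n, Polynomial.aeval (Complex.exp (2 * Real.pi * Complex.I * j / n)) F

noncomputable def MQ (n : ℕ) (f g : Polynomial ℤ) : ℂ :=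
  ∏ j ∈ Finset.range (2 * n),
    (Polynomial.aeval (Complex.exp (2 * Real.pi * Complex.I * j / (2 * n))) f *
       Polynomial.aeval (Complex.exp (2 * Real.pi * Complex.I * j / (2 * n)))⁻¹ f -
     Complex.exp (2 * Real.pi * Complex.I * j / (2 * n)) ^ n *
       Polynomial.aeval (Complex.exp (2 * Real.pi * Complex.I * j / (2 * n))) g *
       Polynomial.aeval (Complex.exp (2 * Real.pi * Complex.I * j / (2 * n)))⁻¹ g)

theorem prod_range_two_mul {M : Type*} [CommMonoid M] (f : ℕ → M) (n : ℕ) :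
    ∏ j ∈ range (2 * n), f j = ∏ m ∈ range n, (f (2 * m) * f (2 * m + 1)) := by
  induction n with
  | zero => simp
  | succ n ih => rw [mul_add_one, prod_range_succ, prod_range_succ, prod_range_succ, ih, mul_assoc]

theorem exp_two_pi_mul_I_div_pow {n : ℕ} (hn : n ≠ 0) (j : ℕ) :
    exp (2 * Real.pi * I * j / (2 * n)) ^ n = (-1) ^ j := by
  rw [← exp_nat_mul, ← exp_pi_mul_I, ← exp_nat_mul]
  congr 1
  field_simp

theorem prod_sub_mul_exp {n : ℕ} (hn : n ≠ 0) (a c : ℂ) :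
    ∏ m ∈ range n, (c - a * exp (2 * Real.pi * I * m / n)) = c ^ n - a ^ n := by
  have h := congrArg (eval c)
    (X_pow_sub_C_eq_prod (isPrimitiveRoot_exp n hn) (Nat.pos_of_ne_zero hn) (rfl : a ^ n = a ^ n))
  simp only [eval_sub, eval_pow, eval_X, eval_C, eval_prod] at h
  rw [h]
  refine prod_congr rfl fun m _ => ?_
  rw [← exp_nat_mul, mul_comm a]
  congr 3
  ring

theorem prod_add_sub_mul_exp_add_inv {n : ℕ} (hn : n ≠ 0) {a u v : ℂ} (ha : a ≠ 0)
    (huv : u * v = a ^ 2) :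
    ∏ m ∈ range n,
        (u + v - a * (exp (2 * Real.pi * I * m / n) + (exp (2 * Real.pi * I * m / n))⁻¹)) =
      u ^ n + v ^ n - 2 * a ^ n := by
  have hfactor (ζ : ℂ) (hζ : ζ ≠ 0) :
      (u - a * ζ) * (v - a * ζ) = (0 - a * ζ) * (u + v - a * (ζ + ζ⁻¹)) := by
    linear_combination huv - a ^ 2 * mul_inv_cancel₀ hζ
  have h := prod_congr rfl fun m (_ : m ∈ range n) =>
    hfactor _ (exp_ne_zero (2 * Real.pi * I * m / n))
  simp only [prod_mul_distrib, prod_sub_mul_exp hn, zero_pow hn] at h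
  refine mul_left_cancel₀ (pow_ne_zero n ha) ?_
  have hpow : u ^ n * v ^ n = (a ^ n) ^ 2 := by rw [← mul_pow, huv, ← pow_mul, ← pow_mul, mul_comm]
  linear_combination h - hpow

theorem MQ_eq_prod (c : ℤ) {n : ℕ} (hn : n ≠ 0) :
    MQ n (1 - (1 + X ^ n) * (1 - X)) (C c * (1 + X ^ n)) =
      ∏ m ∈ range n, (5 - 4 * c ^ 2 -
        2 * (exp (2 * Real.pi * I * m / n) + (exp (2 * Real.pi * I * m / n))⁻¹)) := by
  rw [MQ, prod_range_two_mul]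
  refine prod_congr rfl fun m _ => ?_
  have heven : exp (2 * Real.pi * I * (2 * m : ℕ) / (2 * n)) = exp (2 * Real.pi * I * m / n) := by
    congr 1
    push_cast
    field_simp
  have h1 := exp_two_pi_mul_I_div_pow hn (2 * m)
  have h2 := exp_two_pi_mul_I_div_pow hn (2 * m + 1)
  rw [heven, pow_mul, neg_one_sq, one_pow] at h1
  rw [pow_succ, pow_mul, neg_one_sq, one_pow, one_mul] at h2
  have hinv := mul_inv_cancel₀ (exp_ne_zero (2 * Real.pi * I * m / n))
  simp only [map_sub, map_mul, map_add, map_one, map_pow, aeval_X, map_intCast,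
    eq_intCast, inv_pow, h1, h2, heven]
  linear_combination 4 * hinv

def quadPowCoeff (s t : ℤ) : ℕ → ℤ × ℤ
  | 0 => (1, 0)
  | k + 1 => (t * (quadPowCoeff s t k).2, (quadPowCoeff s t k).1 + s * (quadPowCoeff s t k).2)

theorem pow_eq_quadPowCoeff {R : Type*} [CommRing R] {s t : ℤ} {β : R} (hβ : β ^ 2 = s * β + t)
    (k : ℕ) : β ^ k = (quadPowCoeff s t k).1 + (quadPowCoeff s t k).2 * β := by
  induction k with
  | zero => simp [quadPowCoeff]
  | succ k ih =>
    simp only [quadPowCoeff, Int.cast_add, Int.cast_mul]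
    linear_combination β * ih + ((quadPowCoeff s t k).2 : R) * hβ

def powSubFst (s t : ℤ) (n : ℕ) : ℤ :=
  ∑ k ∈ range n, (n.choose (k + 1) : ℤ) * 2 ^ (n - 1 - k) * (quadPowCoeff s t k).1

def powSubSnd (s t : ℤ) (n : ℕ) : ℤ :=
  ∑ k ∈ range n, (n.choose (k + 1) : ℤ) * 2 ^ (n - 1 - k) * (quadPowCoeff s t k).2

theorem add_two_pow_sub_two_pow {R : Type*} [CommRing R] {s t : ℤ} {β : R}
    (hβ : β ^ 2 = s * β + t) (n : ℕ) :
    (β + 2) ^ n - 2 ^ n = β * (powSubFst s t n + powSubSnd s t n * β) := by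
  rw [add_pow, sum_range_succ', powSubFst, powSubSnd]
  push_cast
  rw [sum_mul, ← sum_add_distrib, mul_sum]
  simp only [pow_zero, one_mul, Nat.sub_zero, Nat.choose_zero_right, Nat.cast_one, mul_one,
    add_sub_cancel_right]
  refine sum_congr rfl fun k _ => ?_
  rw [show n - (k + 1) = n - 1 - k by omega, pow_succ, pow_eq_quadPowCoeff hβ k]
  ring

theorem MQ_mul_two_pow {c s : ℤ} (hs : 1 - 4 * c ^ 2 = s) {n : ℕ} (hn : n ≠ 0) :
    MQ n (1 - (1 + X ^ n) * (1 - X)) (C c * (1 + X ^ n)) * 2 ^ n =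
      ((2 * s * (powSubFst s (2 * s) n ^ 2 + s * powSubFst s (2 * s) n * powSubSnd s (2 * s) n -
        2 * s * powSubSnd s (2 * s) n ^ 2) : ℤ) : ℂ) := by
  obtain ⟨d, hd⟩ := IsAlgClosed.exists_eq_mul_self ((s : ℂ) ^ 2 + 8 * s)
  set β : ℂ := (s + d) / 2
  set β' : ℂ := (s - d) / 2
  have hβ : β ^ 2 = s * β + (2 * s : ℤ) := by push_cast; linear_combination (-1 / 4 : ℂ) * hd
  have hβ' : β' ^ 2 = s * β' + (2 * s : ℤ) := by push_cast; linear_combination (-1 / 4 : ℂ) * hd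
  have hprod : (β + 2) * (β' + 2) = 2 ^ 2 := by linear_combination (1 / 4 : ℂ) * hd
  have hsum : β + 2 + (β' + 2) = 5 - 4 * (c : ℂ) ^ 2 := by
    have hs' : ((1 - 4 * c ^ 2 : ℤ) : ℂ) = s := congrArg _ hs
    push_cast at hs'
    linear_combination -hs'
  have hpow : (β + 2) ^ n * (β' + 2) ^ n = (2 ^ n) ^ 2 := by
    rw [← mul_pow, hprod, ← pow_mul, ← pow_mul, mul_comm]
  have hu := add_two_pow_sub_two_pow hβ n
  have hv := add_two_pow_sub_two_pow hβ' n
  set x : ℂ := (powSubFst s (2 * s) n : ℂ)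
  set y : ℂ := (powSubSnd s (2 * s) n : ℂ)
  calc _ = ((β + 2) ^ n + (β' + 2) ^ n - 2 * 2 ^ n) * 2 ^ n := by
        rw [MQ_eq_prod c hn, ← hsum, prod_add_sub_mul_exp_add_inv hn two_ne_zero hprod]
    _ = -(((β + 2) ^ n - 2 ^ n) * ((β' + 2) ^ n - 2 ^ n)) := by linear_combination hpow
    _ = -(β * β') * ((x + y * β) * (x + y * β')) := by rw [hu, hv]; ring
    _ = _ := by
        -- the norm form, from `β + β' = s` and `β * β' = -2 * s`
        push_cast
        linear_combination (-1 / 4 : ℂ) * (x ^ 2 + s * x * y + (β * β' - 2 * s) * y ^ 2) * hd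

theorem pow_dvd_of_pow_add_dvd_mul {α : Type*} [CommMonoidWithZero α] [IsCancelMulZero α]
    {q j m : α} (hq : Prime q) {a b : ℕ} (h : q ^ (a + b) ∣ j * m) (hj : ¬ q ^ (b + 1) ∣ j) :
    q ^ a ∣ m := by
  rw [pow_dvd_iff_le_emultiplicity, emultiplicity_mul hq] at h
  rw [← emultiplicity_lt_iff_not_dvd, Nat.cast_add, Nat.cast_one,
    ENat.lt_add_one_iff (ENat.natCast_ne_top b)] at hj
  rw [pow_dvd_iff_le_emultiplicity]
  have : (b : ℕ∞) + a ≤ b + emultiplicity q m := by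
    rw [add_comm, ← Nat.cast_add]
    exact h.trans (by gcongr)
  exact (WithTop.add_le_add_iff_left (ENat.natCast_ne_top b)).1 this

theorem lt_emultiplicity_of_pow_succ_dvd {α : Type*} [CommMonoid α] {a b : α} {k : ℕ}
    (h : a ^ (k + 1) ∣ b) : (k : ℕ∞) < emultiplicity a b :=
  (ENat.add_one_le_iff (ENat.natCast_ne_top k)).1 (by exact_mod_cast le_emultiplicity_of_pow_dvd h)

theorem pow_dvd_quadPowCoeff {q s t : ℤ} (hs : q ∣ s) (ht : q ∣ t) (k : ℕ) :
    q ^ ((k + 1) / 2) ∣ (quadPowCoeff s t k).1 ∧ q ^ (k / 2) ∣ (quadPowCoeff s t k).2 := by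
  induction k with
  | zero => simp [quadPowCoeff]
  | succ k ih =>
    refine ⟨?_, dvd_add ((pow_dvd_pow q (by omega)).trans ih.1) ?_⟩
    · rw [show (k + 1 + 1) / 2 = k / 2 + 1 by omega, pow_succ']
      exact mul_dvd_mul ht ih.2
    · exact (pow_dvd_pow q (by omega : (k + 1) / 2 ≤ k / 2 + 1)).trans
        (pow_succ' q (k / 2) ▸ mul_dvd_mul hs ih.2)

theorem three_mul_le_pow {p : ℕ} (hp : 3 ≤ p) (m : ℕ) : 3 * (2 * m + 1) ≤ p ^ (m + 1) := by
  have h := one_add_le_pow_of_two_add_nonneg (a := 2) (Nat.zero_le 4) m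
  calc 3 * (2 * m + 1) ≤ 3 * 3 ^ m := by norm_num at h; omega
    _ = 3 ^ (m + 1) := by ring
    _ ≤ p ^ (m + 1) := Nat.pow_le_pow_left hp _

theorem pow_dvd_choose_mul {p α n : ℕ} (h : p ^ α ∣ n) (j : ℕ) : p ^ α ∣ n.choose j * j := by
  rcases n with _ | n
  · rcases j with _ | j <;> simp
  · rcases j with _ | j
    · simp
    · exact Nat.add_one_mul_choose_eq n j ▸ h.mul_right _

theorem pow_dvd_choose_mul_of_dvd {p : ℕ} (hp : p.Prime) {α n : ℕ} (hn : p ^ α ∣ n)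
    {a b k : ℕ} {z : ℤ} (hz : (p : ℤ) ^ (a + b) ∣ z) (hk : ¬ p ^ (b + 1) ∣ k + 1) :
    (p : ℤ) ^ (α + a) ∣ n.choose (k + 1) * z := by
  refine pow_dvd_of_pow_add_dvd_mul (Nat.prime_iff_prime_int.mp hp) (j := ((k + 1 : ℕ) : ℤ)) ?_
    (by exact_mod_cast hk)
  rw [add_assoc, pow_add, ← mul_assoc, mul_comm _ (n.choose _ : ℤ)]
  exact mul_dvd_mul (by exact_mod_cast pow_dvd_choose_mul hn (k + 1)) hz

section Valuation

variable {p : ℕ} {s t : ℤ} {α n : ℕ}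

theorem pow_dvd_powSubSnd (hp : p.Prime) (hp3 : 3 ≤ p) (hs : (p : ℤ) ∣ s) (ht : (p : ℤ) ∣ t)
    (hn : p ^ α ∣ n) : (p : ℤ) ^ α ∣ powSubSnd s t n := by
  refine dvd_sum fun k _ => ?_
  have hk : ¬ p ^ (k / 2 + 1) ∣ k + 1 := fun h => by
    have := Nat.le_of_dvd (by omega) h
    have := three_mul_le_pow hp3 (k / 2)
    omega
  rw [mul_right_comm]
  exact (pow_dvd_choose_mul_of_dvd hp hn (a := 0) (by simpa using (pow_dvd_quadPowCoeff hs ht k).2)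
    hk).mul_right _

theorem pow_succ_dvd_powSubFst_sub (hp : p.Prime) (hp3 : 3 ≤ p) (hs : (p : ℤ) ∣ s)
    (ht : (p : ℤ) ∣ t) (hn : p ^ α ∣ n) :
    (p : ℤ) ^ (α + 1) ∣
      powSubFst s t n - (n * 2 ^ (n - 1) + n.choose 3 * 2 ^ (n - 3) * t) := by
  set T : ℕ → ℤ := fun k => (n.choose (k + 1) : ℤ) * 2 ^ (n - 1 - k) * (quadPowCoeff s t k).1
  have hext : powSubFst s t n = ∑ k ∈ range (3 + n), T k := by
    refine sum_subset (range_subset_range.2 (by omega)) fun k _ hk => ?_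
    simp [Nat.choose_eq_zero_of_lt (by simpa using hk : n < k + 1)]
  have hhead : ∑ k ∈ range 3, T k = n * 2 ^ (n - 1) + n.choose 3 * 2 ^ (n - 3) * t := by
    simp [T, sum_range_succ, quadPowCoeff, show n - 1 - 2 = n - 3 by omega]
  rw [hext, sum_range_add, hhead, add_sub_cancel_left]
  refine dvd_sum fun i _ => ?_
  -- term `k = 3 + i`: the power of `p` dividing its coefficient exceeds the `p`-part of `k + 1`
  have hk : ¬ p ^ ((i + 4) / 2 - 1 + 1) ∣ 3 + i + 1 := fun h => by
    have := Nat.le_of_dvd (by omega) h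
    have := three_mul_le_pow hp3 ((i + 4) / 2 - 1)
    omega
  have hx : (p : ℤ) ^ (1 + ((i + 4) / 2 - 1)) ∣ (quadPowCoeff s t (3 + i)).1 := by
    rw [show 1 + ((i + 4) / 2 - 1) = (3 + i + 1) / 2 by omega]
    exact (pow_dvd_quadPowCoeff hs ht _).1
  simp only [T, mul_right_comm _ (2 ^ _ : ℤ)]
  exact (pow_dvd_choose_mul_of_dvd hp hn hx hk).mul_right _

end Valuation

theorem Int.not_natCast_dvd_two {p : ℕ} (hp3 : 3 ≤ p) : ¬ (p : ℤ) ∣ 2 := fun h => by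
  have := Nat.le_of_dvd two_pos (by exact_mod_cast h : p ∣ 2)
  omega

-- For `p = 3` the `C(n,3)` term is not negligible modulo `p ^ (α + 1)`; clearing the denominator
-- of `C(n,3)` makes `n` a common factor of both terms.
theorem twelve_mul_main_term (s : ℤ) {n : ℕ} (hn : n ≠ 0) :
    12 * (n * 2 ^ (n - 1) + n.choose 3 * 2 ^ (n - 3) * (2 * s)) =
      n * 2 ^ (n - 1) * (12 + (n - 1) * (n - 2) * s) := by
  rcases n with _ | _ | _ | m
  · exact absurd rfl hn
  · simp [Nat.choose_eq_zero_of_lt]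
  · simp
  · have hc : (m + 3).choose 3 * 6 = (m + 3) * (m + 2) * (m + 1) := by
      rw [mul_comm, show 6 = Nat.factorial 3 from rfl, ← Nat.descFactorial_eq_factorial_mul_choose]
      simp [Nat.descFactorial]
      ring
    rw [show m + 1 + 1 + 1 = m + 3 by ring, show m + 3 - 1 = m + 2 by omega, Nat.add_sub_cancel,
      pow_add]
    push_cast
    linear_combination (4 * 2 ^ m * s) * (by exact_mod_cast hc :
      ((m + 3).choose 3 : ℤ) * 6 = (m + 3) * (m + 2) * (m + 1))

theorem emultiplicity_twelve_add {p : ℕ} (hp : p.Prime) (hp3 : 3 ≤ p) (n : ℤ) :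
    emultiplicity (p : ℤ) (12 + (n - 1) * (n - 2) * (p * (2 - p))) = emultiplicity (p : ℤ) 12 := by
  by_cases h3 : p = 3
  · subst h3
    have h4 : ¬ (3 : ℤ) ∣ 4 - (n - 1) * (n - 2) := fun h => by
      have := (ZMod.intCast_zmod_eq_zero_iff_dvd _ 3).2 h
      push_cast at this
      generalize (n : ZMod 3) = x at this
      revert x; decide
    rw [Nat.cast_ofNat,
      show (12 : ℤ) + (n - 1) * (n - 2) * (3 * (2 - 3)) = 3 * (4 - (n - 1) * (n - 2)) by ring,
      emultiplicity_mul Int.prime_three, emultiplicity_eq_zero.2 h4,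
      show (12 : ℤ) = 3 * 4 by norm_num, emultiplicity_mul Int.prime_three,
      emultiplicity_eq_zero.2 (by norm_num : ¬ (3 : ℤ) ∣ 4)]
  · have h12 : ¬ (p : ℤ) ∣ 12 := fun h => by
      rcases (Nat.Prime.dvd_mul hp).1 (by exact_mod_cast h : p ∣ 2 ^ 2 * 3) with h | h
      · exact absurd (Nat.le_of_dvd two_pos (hp.dvd_of_dvd_pow h)) (by omega)
      · exact h3 ((Nat.prime_dvd_prime_iff_eq hp Nat.prime_three).1 h)
    rw [emultiplicity_eq_zero.2 h12, emultiplicity_eq_zero.2]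
    rwa [dvd_add_left ((dvd_mul_right _ _).mul_left _)]

theorem emultiplicity_main_term {p : ℕ} (hp : p.Prime) (hp3 : 3 ≤ p) {α n : ℕ}
    (hn : emultiplicity (p : ℤ) n = α) :
    emultiplicity (p : ℤ) (n * 2 ^ (n - 1) + n.choose 3 * 2 ^ (n - 3) * (2 * (p * (2 - p)))) =
      α := by
  have hpZ := Nat.prime_iff_prime_int.mp hp
  have hn0 : n ≠ 0 := by rintro rfl; simp at hn
  have h12 : emultiplicity (p : ℤ) 12 ≠ ⊤ :=
    finiteMultiplicity_iff_emultiplicity_ne_top.1 (Int.finiteMultiplicity_iff.2 ⟨by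
      simpa using hp.ne_one, by norm_num⟩)
  have h := congrArg (emultiplicity (p : ℤ)) (twelve_mul_main_term (p * (2 - p)) hn0)
  rw [emultiplicity_mul hpZ, emultiplicity_mul hpZ, emultiplicity_mul hpZ, emultiplicity_pow hpZ,
    emultiplicity_eq_zero.2 (Int.not_natCast_dvd_two hp3), mul_zero, add_zero, hn,
    emultiplicity_twelve_add hp hp3] at h
  exact WithTop.add_left_cancel h12 (h.trans (add_comm _ _))

theorem emultiplicity_powSubFst {p : ℕ} (hp : p.Prime) (hp3 : 3 ≤ p) {α n : ℕ}
    (hn : emultiplicity (p : ℤ) n = α) :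
    emultiplicity (p : ℤ) (powSubFst (p * (2 - p)) (2 * (p * (2 - p))) n) = α := by
  have hdvd : p ^ α ∣ n := by exact_mod_cast pow_dvd_of_le_emultiplicity hn.ge
  rw [← sub_add_cancel (powSubFst _ _ n), emultiplicity_add_of_gt] <;>
    rw [emultiplicity_main_term hp hp3 hn]
  exact lt_emultiplicity_of_pow_succ_dvd (pow_succ_dvd_powSubFst_sub hp hp3 (dvd_mul_right _ _)
    ((dvd_mul_right _ _).mul_left 2) hdvd)

theorem emultiplicity_norm {R : Type*} [CommRing R] [IsDomain R] {q s t x y : R} (hq : Prime q)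
    (hs : q ∣ s) (ht : q ∣ t) {α : ℕ} (hx : emultiplicity q x = α) (hy : q ^ α ∣ y) :
    emultiplicity q (x ^ 2 + s * x * y - t * y ^ 2) = (2 * α : ℕ) := by
  have hxs : emultiplicity q (x + s * y) = α := by
    rw [add_comm, emultiplicity_add_of_gt] <;> rw [hx]
    exact lt_emultiplicity_of_pow_succ_dvd (pow_succ' q α ▸ mul_dvd_mul hs hy)
  have hxx : emultiplicity q (x * (x + s * y)) = (2 * α : ℕ) := by
    rw [emultiplicity_mul hq, hx, hxs]; push_cast; ring
  rw [show x ^ 2 + s * x * y - t * y ^ 2 = -(t * y ^ 2) + x * (x + s * y) by ring,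
    emultiplicity_add_of_gt] <;> rw [hxx]
  rw [emultiplicity_neg]
  refine lt_emultiplicity_of_pow_succ_dvd ?_
  rw [pow_succ', two_mul, pow_add, ← sq]
  exact mul_dvd_mul ht (pow_dvd_pow_of_dvd hy 2)

theorem emultiplicity_mul_two_sub_self {p : ℕ} (hp : p.Prime) (hp3 : 3 ≤ p) :
    emultiplicity (p : ℤ) (p * (2 - p)) = 1 := by
  have hpZ := Nat.prime_iff_prime_int.mp hp
  rw [emultiplicity_mul hpZ,
    emultiplicity_eq_zero.2 (dvd_sub_self_right.not.2 (Int.not_natCast_dvd_two hp3)), add_zero]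
  simpa using emultiplicity_pow_self_of_prime hpZ 1

theorem one_sub_four_mul_half_sq {p : ℕ} (hodd : Odd p) :
    1 - 4 * (((p - 1) / 2 : ℕ) : ℤ) ^ 2 = p * (2 - p) := by
  obtain ⟨k, rfl⟩ := hodd
  simp only [Nat.add_sub_cancel, Nat.mul_div_cancel_left k two_pos]
  push_cast
  ring

theorem stmt10_general (p : ℕ) (hp : p.Prime) (hodd : Odd p) (n α : ℕ)
    (hdvd : p ^ α ∣ n) (hndvd : ¬ p ^ (α + 1) ∣ n)
    (M : ℤ) (hM : (M : ℂ) =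
      MQ n (1 - (1 + Polynomial.X ^ n) * (1 - Polynomial.X))
           (Polynomial.C (((p - 1) / 2 : ℕ) : ℤ) * (1 + Polynomial.X ^ n))) :
    (p : ℤ) ^ (2 * α + 1) ∣ M ∧ ¬ (p : ℤ) ^ (2 * α + 2) ∣ M := by
  have hpZ := Nat.prime_iff_prime_int.mp hp
  have hp3 : 3 ≤ p := by obtain ⟨k, rfl⟩ := hodd; have := hp.two_le; omega
  have hn : n ≠ 0 := by rintro rfl; exact hndvd (dvd_zero _)
  have hν : emultiplicity (p : ℤ) n = α := by
    rw [Int.natCast_emultiplicity]; exact emultiplicity_eq_coe.2 ⟨hdvd, hndvd⟩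
  set s : ℤ := p * (2 - p)
  have hps : (p : ℤ) ∣ s := dvd_mul_right _ _
  have hM2 : M * 2 ^ n = 2 * s * (powSubFst s (2 * s) n ^ 2 +
      s * powSubFst s (2 * s) n * powSubSnd s (2 * s) n - 2 * s * powSubSnd s (2 * s) n ^ 2) := by
    exact_mod_cast hM ▸ MQ_mul_two_pow (s := s) (one_sub_four_mul_half_sq hodd) hn
  have hN := emultiplicity_norm hpZ hps (hps.mul_left 2) (emultiplicity_powSubFst hp hp3 hν)
    (pow_dvd_powSubSnd hp hp3 hps (hps.mul_left 2) hdvd)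
  have h := congrArg (emultiplicity (p : ℤ)) hM2
  rw [emultiplicity_mul hpZ, emultiplicity_pow hpZ, emultiplicity_mul hpZ, emultiplicity_mul hpZ,
    emultiplicity_eq_zero.2 (Int.not_natCast_dvd_two hp3), emultiplicity_mul_two_sub_self hp hp3,
    hN, mul_zero, add_zero, zero_add] at h
  refine emultiplicity_eq_coe.1 ?_
  rw [h]
  push_cast
  ring

theorem stmt10 (p : ℕ) (hp : p.Prime) (hodd : Odd p) (n α : ℕ) (hn : 0 < n)
    (hdvd : p ^ α ∣ n) (hndvd : ¬ p ^ (α + 1) ∣ n)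
    (M : ℤ) (hM : (M : ℂ) =
      MQ n (1 - (1 + Polynomial.X ^ n) * (1 - Polynomial.X))
           (Polynomial.C (((p - 1) / 2 : ℕ) : ℤ) * (1 + Polynomial.X ^ n))) :
    (p : ℤ) ^ (2 * α + 1) ∣ M ∧ ¬ (p : ℤ) ^ (2 * α + 2) ∣ M :=
  stmt10_general p hp hodd n α hdvd hndvd M hM
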